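/- arXiv:1710.07113 — 5 statements merged into one kernel-verified Lean document; each statement's English description precedes it below -/
import Mathlib

section
/- Let $l$ and $m$ be integers with $l \geq 2$ and $0 \leq m \leq 4l$. Then $\sum_{j=0}^{\min\{l, \lfloor m/2 \rfloor\}} \binom{l}{j}\binom{4l}{2m-4j} \geq \binom{4l}{m}$. -/
private lemma step_choose {n k : ℕ} (h : 2 * k + 1 ≤ n) : n.choose k ≤ n.choose (k + 1) := by
  rcases le_or_gt (2 * (k + 1)) n with h2 | h2
  · exact Nat.choose_le_succ_of_lt_half_left (by omega)
  · have hn : n = 2 * k + 1 := by omega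
    subst hn
    have := Nat.choose_symm (n := 2 * k + 1) (k := k + 1) (by omega)
    simp only [show 2 * k + 1 - (k + 1) = k by omega] at this
    omega

private lemma choose_mono_aux {n : ℕ} : ∀ b a, a ≤ b → 2 * b ≤ n → n.choose a ≤ n.choose b := by
  intro b
  induction b with
  | zero => intro a ha _; interval_cases a; exact le_refl _
  | succ b ih =>
    intro a ha h2
    rcases Nat.lt_or_ge a (b + 1) with h | h
    · exact le_trans (ih a (by omega) (by omega)) (step_choose (by omega))
    · have : a = b + 1 := by omega
      subst this; exact le_refl _

/-- if `a ≤ b` and `a + b ≤ n` then `C(n,a) ≤ C(n,b)` -/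
private lemma choose_le_choose_right {n a b : ℕ} (hab : a ≤ b) (h : a + b ≤ n) :
    n.choose a ≤ n.choose b := by
  rcases le_or_gt (2 * b) n with h2 | h2
  · exact choose_mono_aux b a hab h2
  · have hb : b ≤ n := by omega
    have hsymm : n.choose (n - b) = n.choose b := Nat.choose_symm hb
    rw [← hsymm]
    exact choose_mono_aux (n - b) a (by omega) (by omega)

/-- `l ≤ C(l,k)` when `1 ≤ k ≤ l - 1`. -/
private lemma le_choose {l k : ℕ} (h1 : 1 ≤ k) (h2 : k + 1 ≤ l) : l ≤ l.choose k := by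
  have := choose_le_choose_right (n := l) (a := 1) (b := k) h1 (by omega)
  simpa [Nat.choose_one_right] using this

theorem stmt_0 (l m : ℕ) (hl : 2 ≤ l) (hm : m ≤ 4 * l) :
    (4 * l).choose m ≤
      ∑ j ∈ Finset.range (min l (m / 2) + 1),
        l.choose j * (4 * l).choose (2 * m - 4 * j) := by
  have final : ∀ j : ℕ, j ≤ min l (m / 2) →
      (4 * l).choose m ≤ l.choose j * (4 * l).choose (2 * m - 4 * j) →
      (4 * l).choose m ≤ ∑ j ∈ Finset.range (min l (m / 2) + 1),
        l.choose j * (4 * l).choose (2 * m - 4 * j) := by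
    intro j hj hle
    exact hle.trans (Finset.single_le_sum
      (f := fun j => l.choose j * (4 * l).choose (2 * m - 4 * j))
      (fun i _ => Nat.zero_le _) (Finset.mem_range.mpr (by omega)))
  set q := m / 4 with hq
  set r := m % 4 with hr
  have hm4 : m = 4 * q + r ∧ r < 4 := by omega
  obtain ⟨hm4, hr4⟩ := hm4
  rcases Nat.eq_zero_or_pos r with hr0 | hr1
  · -- r = 0 : take j = q
    apply final q (by omega)
    rw [show 2 * m - 4 * q = m by omega]
    exact Nat.le_mul_of_pos_left _ (Nat.choose_pos (by omega))
  rcases le_or_gt (2 * m + r) (4 * l) with hreg | hreg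
  · -- region 1 : take j = q, index m + r
    apply final q (by omega)
    rw [show 2 * m - 4 * q = m + r by omega]
    calc (4 * l).choose m ≤ (4 * l).choose (m + r) :=
          choose_le_choose_right (by omega) (by omega)
      _ ≤ l.choose q * (4 * l).choose (m + r) :=
          Nat.le_mul_of_pos_left _ (Nat.choose_pos (by omega))
  rcases le_or_gt (4 * l + 4) (2 * m + r) with hreg2 | hreg2
  · -- region 2 : take j = q + 1, index m + r - 4
    apply final (q + 1) (by omega)
    rw [show 2 * m - 4 * (q + 1) = m + r - 4 by omega]
    have hsym : (4 * l).choose m = (4 * l).choose (4 * l - m) :=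
      (Nat.choose_symm hm).symm
    calc (4 * l).choose m = (4 * l).choose (4 * l - m) := hsym
      _ ≤ (4 * l).choose (m + r - 4) :=
          choose_le_choose_right (by omega) (by omega)
      _ ≤ l.choose (q + 1) * (4 * l).choose (m + r - 4) :=
          Nat.le_mul_of_pos_left _ (Nat.choose_pos (by omega))
  -- middle cases
  have hcases : (r = 1 ∧ l = 2 * q ∧ m = 4 * q + 1) ∨
      (r = 2 ∧ l = 2 * q + 1 ∧ m = 4 * q + 2) ∨
      (r = 3 ∧ l = 2 * q + 2 ∧ m = 4 * q + 3) := by omega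
  rcases hcases with ⟨hrv, hlv, hmv⟩ | ⟨hrv, hlv, hmv⟩ | ⟨hrv, hlv, hmv⟩
  · -- A : l = 2q, m = 2l+1, j = q
    have hq1 : 1 ≤ q := by omega
    apply final q (by omega)
    rw [show 2 * m - 4 * q = 4 * q + 2 by omega, hmv, hlv]
    set X := (8 * q).choose (4 * q + 1) with hX
    set Y := (8 * q).choose (4 * q + 2) with hY
    rw [show 4 * (2 * q) = 8 * q by ring]
    have hid : Y * (4 * q + 2) = X * (4 * q - 1) := by
      have := Nat.choose_succ_right_eq (8 * q) (4 * q + 1)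
      rwa [show 8 * q - (4 * q + 1) = 4 * q - 1 by omega] at this
    have hXY : X ≤ 2 * Y := by
      have h2 : X * (4 * q + 2) ≤ 2 * Y * (4 * q + 2) := by
        calc X * (4 * q + 2) ≤ X * (2 * (4 * q - 1)) :=
              Nat.mul_le_mul_left X (by omega)
          _ = 2 * (X * (4 * q - 1)) := by ring
          _ = 2 * (Y * (4 * q + 2)) := by rw [hid]
          _ = 2 * Y * (4 * q + 2) := by ring
      exact Nat.le_of_mul_le_mul_right h2 (by omega)
    have hC : 2 ≤ (2 * q).choose q := by
      have := le_choose (l := 2 * q) (k := q) (by omega) (by omega)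
      omega
    calc X ≤ 2 * Y := hXY
      _ ≤ (2 * q).choose q * Y := Nat.mul_le_mul_right Y hC
  · -- B : l = 2q+1, m = 2l, j = q
    have hq1 : 1 ≤ q := by omega
    apply final q (by omega)
    rw [show 2 * m - 4 * q = 4 * q + 4 by omega, hmv, hlv]
    rw [show 4 * (2 * q + 1) = 8 * q + 4 by ring]
    set X := (8 * q + 4).choose (4 * q + 2) with hX
    set B := (8 * q + 4).choose (4 * q + 3) with hB
    set Y := (8 * q + 4).choose (4 * q + 4) with hY
    have h1 : B * (4 * q + 3) = X * (4 * q + 2) := by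
      have := Nat.choose_succ_right_eq (8 * q + 4) (4 * q + 2)
      rwa [show 8 * q + 4 - (4 * q + 2) = 4 * q + 2 by omega] at this
    have h2 : Y * (4 * q + 4) = B * (4 * q + 1) := by
      have := Nat.choose_succ_right_eq (8 * q + 4) (4 * q + 3)
      rwa [show 8 * q + 4 - (4 * q + 3) = 4 * q + 1 by omega] at this
    have hXY : X ≤ 3 * Y := by
      have h3 : X * ((4 * q + 2) * (4 * q + 1)) ≤ 3 * Y * ((4 * q + 2) * (4 * q + 1)) := by
        calc X * ((4 * q + 2) * (4 * q + 1))
            = (X * (4 * q + 2)) * (4 * q + 1) := by ring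
          _ = (B * (4 * q + 3)) * (4 * q + 1) := by rw [h1]
          _ = (B * (4 * q + 1)) * (4 * q + 3) := by ring
          _ = (Y * (4 * q + 4)) * (4 * q + 3) := by rw [h2]
          _ = Y * ((4 * q + 4) * (4 * q + 3)) := by ring
          _ ≤ Y * (3 * ((4 * q + 2) * (4 * q + 1))) :=
              Nat.mul_le_mul_left Y (by nlinarith)
          _ = 3 * Y * ((4 * q + 2) * (4 * q + 1)) := by ring
      exact Nat.le_of_mul_le_mul_right h3 (by positivity)
    have hC : 3 ≤ (2 * q + 1).choose q := by
      have := le_choose (l := 2 * q + 1) (k := q) (by omega) (by omega)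
      omega
    calc X ≤ 3 * Y := hXY
      _ ≤ (2 * q + 1).choose q * Y := Nat.mul_le_mul_right Y hC
  · -- C : l = 2q+2, m = 2l-1, j = q+1
    apply final (q + 1) (by omega)
    rw [show 2 * m - 4 * (q + 1) = 4 * q + 2 by omega, hmv, hlv]
    rw [show 4 * (2 * q + 2) = 8 * q + 8 by ring]
    set X := (8 * q + 8).choose (4 * q + 3) with hX
    set Y := (8 * q + 8).choose (4 * q + 2) with hY
    have hid : X * (4 * q + 3) = Y * (4 * q + 6) := by
      have := Nat.choose_succ_right_eq (8 * q + 8) (4 * q + 2)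
      rwa [show 8 * q + 8 - (4 * q + 2) = 4 * q + 6 by omega] at this
    have hXY : X ≤ 2 * Y := by
      have h2 : X * (4 * q + 3) ≤ 2 * Y * (4 * q + 3) := by
        calc X * (4 * q + 3) = Y * (4 * q + 6) := hid
          _ ≤ Y * (2 * (4 * q + 3)) := Nat.mul_le_mul_left Y (by omega)
          _ = 2 * Y * (4 * q + 3) := by ring
      exact Nat.le_of_mul_le_mul_right h2 (by omega)
    have hC : 2 ≤ (2 * q + 2).choose (q + 1) := by
      have := le_choose (l := 2 * q + 2) (k := q + 1) (by omega) (by omega)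
      omega
    calc X ≤ 2 * Y := hXY
      _ ≤ (2 * q + 2).choose (q + 1) * Y := Nat.mul_le_mul_right Y hC
end

section
/- Let $G$ be a finite group and let $\{s_1, \ldots, s_c\}$ be a subset of nonidentity elements of $G$. Then for every nonidentity $g \in G$ there exists $i$ with $G = \langle g, s_i \rangle$ if and only if for every choice of maximal subgroups $H_1, \ldots, H_c$ with $s_i \in H_i$ for each $i$, one has $\bigcap_{i=1}^c H_i = 1$. -/
theorem stmt_2 {G : Type*} [Group G] [Finite G] (c : ℕ) (s : Fin c → G)
    (hs : ∀ i, s i ≠ 1) :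
    (∀ g : G, g ≠ 1 → ∃ i, Subgroup.closure {g, s i} = ⊤) ↔
      (∀ H : Fin c → Subgroup G, (∀ i, IsCoatom (H i) ∧ s i ∈ H i) →
        (⨅ i, H i) = ⊥) := by
  constructor
  · intro h H hH
    rw [eq_bot_iff]
    intro g hg
    by_contra hg1
    have hg1' : g ≠ 1 := fun h1 => hg1 (h1 ▸ Subgroup.one_mem _)
    obtain ⟨i, hi⟩ := h g hg1'
    have : Subgroup.closure {g, s i} ≤ H i := by
      rw [Subgroup.closure_le]
      intro x hx
      rcases hx with rfl | hx
      · exact Subgroup.mem_iInf.mp hg i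
      · simp only [Set.mem_singleton_iff] at hx
        exact hx ▸ (hH i).2
    rw [hi] at this
    exact (hH i).1.1 (top_le_iff.mp this)
  · intro h g hg
    by_contra hc
    push_neg at hc
    have : ∀ i, ∃ H : Subgroup G, Subgroup.closure {g, s i} ≤ H ∧ IsCoatom H := by
      intro i
      rcases eq_top_or_exists_le_coatom
        (Subgroup.closure {g, s i}) with h1 | ⟨H, hH, hle⟩
      · exact absurd h1 (hc i)
      · exact ⟨H, hle, hH⟩
    choose H hle hco using this
    have := h H (fun i => ⟨hco i, hle i (Subgroup.subset_closure (by simp))⟩)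
    have hgmem : g ∈ ⨅ i, H i :=
      Subgroup.mem_iInf.mpr fun i => hle i (Subgroup.subset_closure (by simp))
    rw [this] at hgmem
    exact hg hgmem
end

section
/- Let $G$ be a finite group, let $s \in G$ with $s \neq 1$, and suppose $H$ is the unique maximal subgroup of $G$ containing $s$, and $H$ is core-free (contains no nontrivial normal subgroup of $G$). If there exist $g_1, \ldots, g_c \in G$ with $\bigcap_{i=1}^c H^{g_i} = 1$, then $\{s^{g_1}, \ldots, s^{g_c}\}$ is a total dominating set for the generating graph of $G$: for all nonidentity $x \in G$ there exists $i$ with $\langle x, s^{g_i} \rangle = G$. -/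
theorem stmt_3 {G : Type*} [Group G] [Finite G] (s : G) (hs : s ≠ 1)
    (H : Subgroup G) (hmax : IsCoatom H) (hsH : s ∈ H)
    (huniq : ∀ K : Subgroup G, IsCoatom K → s ∈ K → K = H)
    (hcf : ∀ N : Subgroup G, N.Normal → N ≤ H → N = ⊥)
    (c : ℕ) (g : Fin c → G)
    (hbase : (⨅ i, Subgroup.map (MulAut.conj (g i)⁻¹).toMonoidHom H) = ⊥) :
    ∀ x : G, x ≠ 1 → ∃ i, Subgroup.closure {x, (g i)⁻¹ * s * g i} = ⊤ := by
  intro x hx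
  by_contra hcon
  push_neg at hcon
  apply hx
  rw [← Subgroup.mem_bot, ← hbase, Subgroup.mem_iInf]
  intro i
  obtain ⟨M, hMco, hM⟩ :=
    (eq_top_or_exists_le_coatom (Subgroup.closure {x, (g i)⁻¹ * s * g i})).resolve_left (hcon i)
  have hxM : x ∈ M := hM (Subgroup.subset_closure (by simp))
  have hsM : (g i)⁻¹ * s * g i ∈ M := hM (Subgroup.subset_closure (by simp))
  -- K := map (conj (g i)) M is a coatom containing s
  have hKco : IsCoatom (Subgroup.map (MulAut.conj (g i) : G ≃* G).toMonoidHom M) :=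
    (OrderIso.isCoatom_iff (MulEquiv.mapSubgroup (MulAut.conj (g i) : G ≃* G)) M).mpr hMco
  have hsK : s ∈ Subgroup.map (MulAut.conj (g i) : G ≃* G).toMonoidHom M := by
    refine ⟨(g i)⁻¹ * s * g i, hsM, ?_⟩
    simp [MulAut.conj_apply, mul_assoc]
  have hK := huniq _ hKco hsK
  have : M = Subgroup.map (MulAut.conj (g i)⁻¹).toMonoidHom H := by
    rw [← hK, Subgroup.map_map]
    ext y
    constructor
    · intro hy
      refine ⟨y, hy, ?_⟩
      simp [MulAut.conj_apply]
      group
    · rintro ⟨z, hz, rfl⟩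
      simpa [MulAut.conj_apply, mul_assoc] using hz
  rw [← this]
  exact hxM
end

section
/- Let $G$ be a finite group, $s \in G$ with $s \neq 1$, and let $H$ be a maximal subgroup of $G$ containing $s$. Suppose every subset of $G/H$ of size less than $b$ has nontrivial pointwise stabiliser (i.e., the base size of the action of $G$ on the cosets $G/H$ is at least $b$). Then any set $\{s^{g_1}, \ldots, s^{g_c}\}$ of conjugates of $s$ which is a total dominating set for the generating graph of $G$ satisfies $c \geq b$. -/
theorem stmt_4 {G : Type*} [Group G] [Finite G] (s : G) (hs : s ≠ 1)
    (H : Subgroup G) (hmax : IsCoatom H) (hsH : s ∈ H) (b : ℕ)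
    (hbase : ∀ B : Finset (G ⧸ H), B.card < b →
      ∃ g : G, g ≠ 1 ∧ ∀ x ∈ B, g • x = x)
    (c : ℕ) (g : Fin c → G)
    (hTDS : ∀ x : G, x ≠ 1 → ∃ i, Subgroup.closure {x, (g i)⁻¹ * s * g i} = ⊤) :
    b ≤ c := by
  classical
  by_contra hlt
  push_neg at hlt
  set B : Finset (G ⧸ H) :=
    Finset.image (fun i : Fin c => (QuotientGroup.mk ((g i)⁻¹) : G ⧸ H)) Finset.univ with hB
  have hcard : B.card < b := by
    calc B.card ≤ (Finset.univ : Finset (Fin c)).card := Finset.card_image_le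
    _ = c := by simp
    _ < b := hlt
  obtain ⟨x, hx1, hxfix⟩ := hbase B hcard
  obtain ⟨i, hi⟩ := hTDS x hx1
  -- x fixes (g i)⁻¹ H, so g i * x * (g i)⁻¹ ∈ H
  have hfix : x • (QuotientGroup.mk ((g i)⁻¹) : G ⧸ H) = QuotientGroup.mk ((g i)⁻¹) := by
    apply hxfix
    exact Finset.mem_image_of_mem _ (Finset.mem_univ i)
  have hx : g i * x * (g i)⁻¹ ∈ H := by
    have : (QuotientGroup.mk (x * (g i)⁻¹) : G ⧸ H) = QuotientGroup.mk ((g i)⁻¹) := hfix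
    rw [QuotientGroup.eq] at this
    have h2 : (g i * x⁻¹ * (g i)⁻¹)⁻¹ ∈ H := H.inv_mem (by
      simpa [mul_assoc] using this)
    simpa [mul_assoc] using h2
  -- the conjugate subgroup K = (g i)⁻¹ H (g i)
  set K : Subgroup G := H.map (MulAut.conj ((g i)⁻¹)).toMonoidHom with hK
  have hxK : x ∈ K := ⟨g i * x * (g i)⁻¹, hx, by
    simp [MulAut.conj_apply, mul_assoc]⟩
  have hsK : (g i)⁻¹ * s * g i ∈ K := ⟨s, hsH, by simp [MulAut.conj_apply, mul_assoc]⟩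
  have hle : Subgroup.closure {x, (g i)⁻¹ * s * g i} ≤ K := by
    apply Subgroup.closure_le K |>.mpr
    intro y hy
    rcases hy with rfl | hy
    · exact hxK
    · simpa using hy ▸ hsK
  rw [hi] at hle
  have hKtop : K = ⊤ := top_le_iff.mp hle
  have : H = ⊤ := by
    have := congrArg (Subgroup.comap (MulAut.conj ((g i)⁻¹)).toMonoidHom) hKtop
    rwa [Subgroup.comap_map_eq_self_of_injective (MulEquiv.injective _),
      Subgroup.comap_top] at this
  exact hmax.1 this
end

section
/- Let $G$ be a finite group, let $H_1, \ldots, H_\ell$ be proper subgroups of $G$, and let $x_1, \ldots, x_m \in G$ represent distinct conjugacy classes. Suppose $A_1, \ldots, A_\ell$ and $B$ are positive reals such that $\sum_{i=1}^m |x_i^G \cap H_j| \leq A_j$ for all $j$ and $|x_i^G| \geq B$ for all $i$. Then for every positive integer $c$, $\sum_{i=1}^m |x_i^G| \left( \sum_{j=1}^\ell \frac{|x_i^G \cap H_j|}{|x_i^G|} \right)^c \leq B^{1-c} \left( \sum_{j=1}^\ell A_j \right)^c$. -/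
private lemma aux_sum_pow {ι : Type*} (s : Finset ι) (f : ι → ℝ)
    (hf : ∀ i ∈ s, 0 ≤ f i) (c : ℕ) (hc : c ≠ 0) :
    ∑ i ∈ s, f i ^ c ≤ (∑ i ∈ s, f i) ^ c := by
  induction s using Finset.cons_induction with
  | empty => simp [zero_pow hc]
  | cons i s hi ih =>
    rw [Finset.sum_cons, Finset.sum_cons]
    calc f i ^ c + ∑ j ∈ s, f j ^ c
        ≤ f i ^ c + (∑ j ∈ s, f j) ^ c := by
          gcongr
          exact ih fun j hj => hf j (Finset.mem_cons_of_mem hj)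
      _ ≤ (f i + ∑ j ∈ s, f j) ^ c :=
          pow_add_pow_le (hf i (Finset.mem_cons_self i s))
            (Finset.sum_nonneg fun j hj => hf j (Finset.mem_cons_of_mem hj)) hc

theorem stmt_11 {G : Type*} [Group G] [Finite G] (ℓ m : ℕ)
    (H : Fin ℓ → Subgroup G) (hH : ∀ j, H j ≠ ⊤)
    (x : Fin m → G) (hx : ∀ i j, i ≠ j → ¬ IsConj (x i) (x j))
    (A : Fin ℓ → ℝ) (B : ℝ) (hA : ∀ j, 0 < A j) (hB : 0 < B)
    (hAj : ∀ j, ∑ i, (Set.ncard {b : G | IsConj (x i) b ∧ b ∈ H j} : ℝ) ≤ A j)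
    (hBi : ∀ i, B ≤ (Set.ncard {b : G | IsConj (x i) b} : ℝ))
    (c : ℕ) (hc : 0 < c) :
    ∑ i, (Set.ncard {b : G | IsConj (x i) b} : ℝ) *
        (∑ j, (Set.ncard {b : G | IsConj (x i) b ∧ b ∈ H j} : ℝ) /
          (Set.ncard {b : G | IsConj (x i) b} : ℝ)) ^ c
      ≤ B ^ (1 - (c : ℤ)) * (∑ j, A j) ^ c := by
  set K : Fin m → ℝ := fun i => (Set.ncard {b : G | IsConj (x i) b} : ℝ) with hK
  set a : Fin m → Fin ℓ → ℝ :=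
    fun i j => (Set.ncard {b : G | IsConj (x i) b ∧ b ∈ H j} : ℝ) with ha
  have hKpos : ∀ i, 0 < K i := fun i => lt_of_lt_of_le hB (hBi i)
  have hanneg : ∀ i j, 0 ≤ a i j := fun i j => Nat.cast_nonneg _
  have hSnn : ∀ i, 0 ≤ ∑ j, a i j := fun i => Finset.sum_nonneg fun j _ => hanneg i j
  have hBz : B ^ (1 - (c : ℤ)) = B / B ^ c := by
    rw [zpow_sub₀ hB.ne', zpow_one, zpow_natCast]
  have h1 : ∀ i, K i * (∑ j, a i j / K i) ^ c
      ≤ B ^ (1 - (c : ℤ)) * (∑ j, a i j) ^ c := by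
    intro i
    rw [← Finset.sum_div, div_pow, hBz]
    rw [mul_div_assoc', div_mul_eq_mul_div,
      div_le_div_iff₀ (pow_pos (hKpos i) c) (pow_pos hB c)]
    obtain ⟨d, rfl⟩ := Nat.exists_eq_succ_of_ne_zero hc.ne'
    have hBK : B ^ d ≤ K i ^ d := pow_le_pow_left₀ hB.le (hBi i) _
    calc K i * (∑ j, a i j) ^ (d + 1) * B ^ (d + 1)
        = (∑ j, a i j) ^ (d + 1) * (K i * (B * B ^ d)) := by ring
      _ ≤ (∑ j, a i j) ^ (d + 1) * (K i * (B * K i ^ d)) := by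
          have := hKpos i
          gcongr
      _ = B * (∑ j, a i j) ^ (d + 1) * K i ^ (d + 1) := by ring
  calc ∑ i, K i * (∑ j, a i j / K i) ^ c
      ≤ ∑ i, B ^ (1 - (c : ℤ)) * (∑ j, a i j) ^ c :=
        Finset.sum_le_sum fun i _ => h1 i
    _ = B ^ (1 - (c : ℤ)) * ∑ i, (∑ j, a i j) ^ c := by rw [Finset.mul_sum]
    _ ≤ B ^ (1 - (c : ℤ)) * (∑ i, ∑ j, a i j) ^ c := by
        have hBz' : (0:ℝ) ≤ B ^ (1 - (c : ℤ)) := zpow_nonneg hB.le _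
        exact mul_le_mul_of_nonneg_left
          (aux_sum_pow _ _ (fun i _ => hSnn i) c hc.ne') hBz'
    _ ≤ B ^ (1 - (c : ℤ)) * (∑ j, A j) ^ c := by
        refine mul_le_mul_of_nonneg_left (pow_le_pow_left₀
          (Finset.sum_nonneg fun i _ => hSnn i) ?_ c) (zpow_nonneg hB.le _)
        rw [Finset.sum_comm]
        exact Finset.sum_le_sum fun j _ => hAj j
end
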